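/- arXiv:1910.12634 — 3 statements merged into one kernel-verified Lean document; each statement's English description precedes it below -/
import Mathlib

section
/- Supermartingale from a decreasing pre-expectation: Let {𝓕_k}_{k∈ℕ} be a filtration on a probability space (Ω, 𝓕, ℙ). Let {X_k}_{k∈ℕ} be random vectors in ℝ^n with X_k being 𝓕_k-measurable for each k, let {R_{k+1}}_{k∈ℕ} be identically distributed random vectors in ℝ^m with R_{k+1} independent of 𝓕_k for each k, and suppose X_{k+1} = F(X_k, R_{k+1}) for each k, where F : ℝ^n × ℝ^m → ℝ^n is measurable. Let h : ℝ^n → ℝ be measurable such that h(X_k) is integrable for every k and h(F(x, R_1)) is integrable for every x ∈ ℝ^n. If for all x ∈ ℝ^n, 𝔼(h(F(x, R_1))) ≤ h(x), then {h(X_k)}_{k∈ℕ} is a supermartingale adapted to {𝓕_k}_{k∈ℕ}. -/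
open MeasureTheory ProbabilityTheory
open scoped ENNReal NNReal

/-- Supermartingale from a decreasing pre-expectation: if `X (k+1) = F (X k) (R (k+1))`
where the samples `R (k+1)` are identically distributed and independent of `ℱ k`, and the
pre-expectation `𝔼 (h (F x R₁))` is at most `h x` for every `x`, then `h (X k)` is a
supermartingale. -/
theorem supermartingale_of_decreasing_pre_expectation
    {Ω : Type*} {m0 : MeasurableSpace Ω} {μ : Measure Ω} [IsProbabilityMeasure μ]
    {ℱ : Filtration ℕ m0} {n m : ℕ}
    {X : ℕ → Ω → Fin n → ℝ} (hX : ∀ k, Measurable[ℱ k] (X k))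
    {R : ℕ → Ω → Fin m → ℝ} (hRmeas : ∀ k, Measurable (R (k + 1)))
    (hident : ∀ k, Measure.map (R (k + 1)) μ = Measure.map (R 1) μ)
    (hindep : ∀ k, Indep (MeasurableSpace.comap (R (k + 1)) inferInstance) (ℱ k) μ)
    {F : (Fin n → ℝ) → (Fin m → ℝ) → Fin n → ℝ}
    (hF : Measurable (Function.uncurry F))
    (hupdate : ∀ k ω, X (k + 1) ω = F (X k ω) (R (k + 1) ω))
    {h : (Fin n → ℝ) → ℝ} (hh : Measurable h)
    (hint : ∀ k, Integrable (fun ω => h (X k ω)) μ)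
    (hint' : ∀ x : Fin n → ℝ, Integrable (fun ω => h (F x (R 1 ω))) μ)
    (hdec : ∀ x : Fin n → ℝ, ∫ ω, h (F x (R 1 ω)) ∂μ ≤ h x) :
    Supermartingale (fun k ω => h (X k ω)) ℱ μ := by
  set ν : Measure (Fin m → ℝ) := Measure.map (R 1) μ with hνdef
  have hR1 : Measurable (R 1) := hRmeas 0
  haveI : IsProbabilityMeasure ν := Measure.isProbabilityMeasure_map hR1.aemeasurable
  have hXm : ∀ k, Measurable (X k) := fun k => (hX k).mono (ℱ.le k) le_rfl
  have hhF : Measurable (fun p : (Fin n → ℝ) × (Fin m → ℝ) => h (F p.1 p.2)) :=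
    hh.comp hF
  set g : (Fin n → ℝ) → ℝ := fun x => ∫ r, h (F x r) ∂ν with hgdef
  have hgs : StronglyMeasurable g := hhF.stronglyMeasurable.integral_prod_right'
  have hpairm : ∀ k, Measurable (fun ω => (X k ω, R (k + 1) ω)) :=
    fun k => (hXm k).prodMk (hRmeas k)
  -- the key "freezing" identity at the level of measures
  have key : ∀ k (s : Set Ω), MeasurableSet[ℱ k] s →
      Measure.map (fun ω => (X k ω, R (k + 1) ω)) (μ.restrict s)
        = (Measure.map (X k) (μ.restrict s)).prod ν := by
    intro k s hs
    haveI : IsFiniteMeasure (Measure.map (X k) (μ.restrict s)) :=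
      Measure.isFiniteMeasure_map _ _
    refine (Measure.prod_eq fun A B hA hB => ?_).symm
    rw [Measure.map_apply (hpairm k) (hA.prod hB),
      Measure.map_apply (hXm k) hA,
      Measure.restrict_apply ((hXm k) hA),
      Measure.restrict_apply ((hpairm k) (hA.prod hB)),
      ← hident k, Measure.map_apply (hRmeas k) hB]
    have hset : (fun ω => (X k ω, R (k + 1) ω)) ⁻¹' (A ×ˢ B) ∩ s
        = R (k + 1) ⁻¹' B ∩ (X k ⁻¹' A ∩ s) := by
      ext ω; simp only [Set.mem_inter_iff, Set.mem_preimage, Set.mem_prod]; tauto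
    rw [hset, (Indep_iff _ _ _).mp (hindep k) _ _ ⟨B, hB, rfl⟩ (((hX k) hA).inter hs),
      mul_comm]
  -- integrability on the product space
  have hintp : ∀ k, Integrable (fun p : (Fin n → ℝ) × (Fin m → ℝ) => h (F p.1 p.2))
      ((Measure.map (X k) μ).prod ν) := by
    intro k
    have h1 : (fun ω => h (F (X k ω) (R (k + 1) ω))) = fun ω => h (X (k + 1) ω) := by
      funext ω; rw [hupdate k ω]
    have h2 : Integrable (fun p : (Fin n → ℝ) × (Fin m → ℝ) => h (F p.1 p.2))
        (Measure.map (fun ω => (X k ω, R (k + 1) ω)) μ) := by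
      rw [integrable_map_measure hhF.aestronglyMeasurable (hpairm k).aemeasurable]
      have h4 := hint (k + 1)
      rw [← h1] at h4
      simpa [Function.comp_def] using h4
    have h3 := key k Set.univ MeasurableSet.univ
    rw [Measure.restrict_univ] at h3
    rwa [h3] at h2
  -- the conditional expectation computation
  have hce : ∀ k, μ[fun ω => h (X (k + 1) ω)|ℱ k] =ᵐ[μ] fun ω => g (X k ω) := by
    intro k
    refine (ae_eq_condExp_of_forall_setIntegral_eq (ℱ.le k) (hint (k + 1))
      (fun s _ _ => ?_) (fun s hs _ => ?_) ?_).symm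
    · -- integrability of g ∘ X k
      have : Integrable g (Measure.map (X k) μ) := (hintp k).integral_prod_left
      exact ((integrable_map_measure hgs.aestronglyMeasurable
        (hXm k).aemeasurable).mp this).integrableOn
    · -- the set-integral identity
      have hres : Measure.map (fun ω => (X k ω, R (k + 1) ω)) (μ.restrict s)
          ≤ Measure.map (fun ω => (X k ω, R (k + 1) ω)) μ :=
        Measure.map_mono Measure.restrict_le_self (hpairm k)
      have hintr : Integrable (fun p : (Fin n → ℝ) × (Fin m → ℝ) => h (F p.1 p.2))
          ((Measure.map (X k) (μ.restrict s)).prod ν) := by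
        rw [← key k s hs]
        refine Integrable.mono_measure ?_ hres
        have h3 := key k Set.univ MeasurableSet.univ
        rw [Measure.restrict_univ] at h3
        rw [h3]; exact hintp k
      calc ∫ ω in s, g (X k ω) ∂μ
          = ∫ x, g x ∂(Measure.map (X k) (μ.restrict s)) := by
            rw [integral_map (hXm k).aemeasurable hgs.aestronglyMeasurable]
        _ = ∫ p, h (F p.1 p.2)
              ∂((Measure.map (X k) (μ.restrict s)).prod ν) := by
            rw [integral_prod _ hintr]
        _ = ∫ p, h (F p.1 p.2)
              ∂(Measure.map (fun ω => (X k ω, R (k + 1) ω)) (μ.restrict s)) := by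
            rw [key k s hs]
        _ = ∫ ω in s, h (F (X k ω) (R (k + 1) ω)) ∂μ := by
            rw [integral_map (hpairm k).aemeasurable hhF.aestronglyMeasurable]
        _ = ∫ ω in s, h (X (k + 1) ω) ∂μ := by
            refine integral_congr_ae (Filter.Eventually.of_forall fun ω => ?_)
            exact congrArg h (hupdate k ω).symm
    · exact ((hgs.comp_measurable (hX k)).aestronglyMeasurable)
  -- conclude using `supermartingale_nat`
  refine supermartingale_nat (fun k => (hh.comp (hX k)).stronglyMeasurable)
    (fun k => hint k) (fun k => ?_)
  refine (hce k).le.trans (Filter.Eventually.of_forall fun ω => ?_)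
  show g (X k ω) ≤ h (X k ω)
  have heq : g (X k ω) = ∫ ω', h (F (X k ω) (R 1 ω')) ∂μ := by
    show (∫ r, h (F (X k ω) r) ∂ν) = _
    rw [hνdef]
    exact integral_map hR1.aemeasurable (hh.comp (hF.comp
      (measurable_const.prodMk measurable_id))).aestronglyMeasurable
  rw [heq]
  exact hdec (X k ω)
end

section
/- Summability of the martingale increments: Let {P_k}_{k∈ℕ} and {V_k}_{k∈ℕ} be sequences of real-valued random variables adapted to a filtration {𝓕_k}_{k∈ℕ} on a probability space (Ω, 𝓕, ℙ), with each P_k and V_k integrable, each V_k nonnegative, P_k² ≤ V_k almost surely for every k, and 𝔼[V_{k+1} | 𝓕_k] ≤ α·V_k almost surely for every k, where α ∈ [0, 1). Then Σ_{k=0}^{∞} 𝔼(|P_k − 𝔼[P_{k+1} | 𝓕_k]|) < ∞; in particular 𝔼(Σ_{k=0}^{∞} |P_k − 𝔼[P_{k+1} | 𝓕_k]|) < ∞. -/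
/-!
Since `P k ^ 2 ≤ V k` and the expectations of `V` decay like `α ^ k`, Cauchy–Schwarz gives
`𝔼|P k| ≤ √(𝔼 V 0) · (√α) ^ k`, a summable geometric bound. Conditional expectation is an
`L¹`-contraction, so `𝔼|P k - 𝔼[P (k+1) | ℱ k]| ≤ 𝔼|P k| + 𝔼|P (k+1)|` is summable as well, and
monotone convergence turns the summable expectations into integrability of the sum.
-/

open MeasureTheory ProbabilityTheory
open scoped ENNReal NNReal

section

variable {Ω : Type*} {m0 : MeasurableSpace Ω} {μ : Measure Ω} {ℱ : Filtration ℕ m0}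

theorem integrable_tsum_of_summable_integral {f : ℕ → Ω → ℝ} (hf : ∀ k, Integrable (f k) μ)
    (hf_nonneg : ∀ k ω, 0 ≤ f k ω) (hsum : Summable fun k => ∫ ω, f k ω ∂μ) :
    Integrable (fun ω => ∑' k, f k ω) μ := by
  have hmeas : ∀ k, AEMeasurable (fun ω => ENNReal.ofReal (f k ω)) μ :=
    fun k => (hf k).aemeasurable.ennreal_ofReal
  have hlintegral : ∫⁻ ω, ∑' k, ENNReal.ofReal (f k ω) ∂μ
      = ENNReal.ofReal (∑' k, ∫ ω, f k ω ∂μ) := by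
    rw [lintegral_tsum hmeas,
      ENNReal.ofReal_tsum_of_nonneg (fun k => integral_nonneg (hf_nonneg k)) hsum]
    congr 1 with k
    exact (ofReal_integral_eq_lintegral_ofReal (hf k) (.of_forall (hf_nonneg k))).symm
  have hfinite := integrable_toReal_of_lintegral_ne_top (AEMeasurable.tsum hmeas)
    (hlintegral ▸ ENNReal.ofReal_ne_top)
  convert hfinite using 2 with ω
  rw [ENNReal.tsum_toReal_eq fun k => ENNReal.ofReal_ne_top]
  simp only [ENNReal.toReal_ofReal (hf_nonneg _ ω)]

theorem sq_integral_abs_le_of_sq_le [IsProbabilityMeasure μ] {f g : Ω → ℝ}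
    (hf : AEStronglyMeasurable f μ) (hg : Integrable g μ) (hfg : ∀ᵐ ω ∂μ, f ω ^ 2 ≤ g ω) :
    (∫ ω, |f ω| ∂μ) ^ 2 ≤ ∫ ω, g ω ∂μ := by
  have hsq_le : ∀ᵐ ω ∂μ, |f ω| ^ 2 ≤ g ω := by simpa only [sq_abs] using hfg
  have hsq_int : Integrable (fun ω => |f ω| ^ 2) μ :=
    hg.mono' (hf.norm.pow 2) <| hsq_le.mono fun ω h => by
      rwa [Real.norm_of_nonneg (sq_nonneg _)]
  have hmemLp : MemLp (fun ω => |f ω|) 2 μ :=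
    (memLp_two_iff_integrable_sq hf.norm).2 hsq_int
  have hvar := variance_nonneg (fun ω => |f ω|) μ
  rw [variance_eq_sub hmemLp] at hvar
  calc (∫ ω, |f ω| ∂μ) ^ 2 ≤ ∫ ω, |f ω| ^ 2 ∂μ := by simpa [sub_nonneg] using hvar
    _ ≤ ∫ ω, g ω ∂μ := integral_mono_ae hsq_int hg hsq_le

theorem integral_le_pow_mul_of_condExp_le [IsFiniteMeasure μ] {V : ℕ → Ω → ℝ}
    (hV : ∀ k, Integrable (V k) μ) {α : ℝ} (hα : 0 ≤ α)
    (hdec : ∀ k, ∀ᵐ ω ∂μ, μ[V (k + 1) | ℱ k] ω ≤ α * V k ω) (k : ℕ) :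
    ∫ ω, V k ω ∂μ ≤ α ^ k * ∫ ω, V 0 ω ∂μ := by
  induction k with
  | zero => simp
  | succ k ih =>
    calc ∫ ω, V (k + 1) ω ∂μ = ∫ ω, μ[V (k + 1) | ℱ k] ω ∂μ := (integral_condExp (ℱ.le k)).symm
      _ ≤ ∫ ω, α * V k ω ∂μ := integral_mono_ae integrable_condExp ((hV k).const_mul α) (hdec k)
      _ = α * ∫ ω, V k ω ∂μ := integral_const_mul α _
      _ ≤ α * (α ^ k * ∫ ω, V 0 ω ∂μ) := mul_le_mul_of_nonneg_left ih hα
      _ = α ^ (k + 1) * ∫ ω, V 0 ω ∂μ := by ring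

theorem summable_integral_abs_of_sq_le [IsProbabilityMeasure μ] {P V : ℕ → Ω → ℝ}
    (hP : ∀ k, AEStronglyMeasurable (P k) μ) (hV : ∀ k, Integrable (V k) μ)
    (hPV : ∀ k, ∀ᵐ ω ∂μ, P k ω ^ 2 ≤ V k ω) {α C : ℝ} (hα : α ∈ Set.Ico 0 1)
    (hdecay : ∀ k, ∫ ω, V k ω ∂μ ≤ α ^ k * C) :
    Summable fun k => ∫ ω, |P k ω| ∂μ := by
  have hsqrt_pow : ∀ k : ℕ, √(α ^ k) = √α ^ k := fun k => by
    rw [Real.sqrt_eq_iff_eq_sq (pow_nonneg hα.1 k) (pow_nonneg (Real.sqrt_nonneg α) k),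
      ← pow_mul, mul_comm, pow_mul, Real.sq_sqrt hα.1]
  have hbound : ∀ k, ∫ ω, |P k ω| ∂μ ≤ √C * √α ^ k := fun k => by
    rw [← hsqrt_pow, ← Real.sqrt_mul' _ (pow_nonneg hα.1 k), mul_comm]
    exact Real.le_sqrt_of_sq_le <|
      (sq_integral_abs_le_of_sq_le (hP k) (hV k) (hPV k)).trans (hdecay k)
  have hsqrt_lt_one : √α < 1 := by simpa using Real.sqrt_lt_sqrt hα.1 hα.2
  refine .of_nonneg_of_le (fun k => integral_nonneg fun ω => abs_nonneg _) hbound ?_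
  exact (summable_geometric_of_lt_one (Real.sqrt_nonneg α) hsqrt_lt_one).mul_left _

theorem summable_integral_abs_sub_condExp {P : ℕ → Ω → ℝ} (hP : ∀ k, Integrable (P k) μ)
    (hsum : Summable fun k => ∫ ω, |P k ω| ∂μ) :
    Summable fun k => ∫ ω, |P k ω - μ[P (k + 1) | ℱ k] ω| ∂μ := by
  refine .of_nonneg_of_le (fun k => integral_nonneg fun ω => abs_nonneg _) (fun k => ?_)
    (hsum.add ((summable_nat_add_iff 1).2 hsum))
  calc ∫ ω, |P k ω - μ[P (k + 1) | ℱ k] ω| ∂μ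
      ≤ ∫ ω, (|P k ω| + |μ[P (k + 1) | ℱ k] ω|) ∂μ :=
        integral_mono ((hP k).sub integrable_condExp).abs
          ((hP k).abs.add integrable_condExp.abs) fun ω => abs_sub _ _
    _ = ∫ ω, |P k ω| ∂μ + ∫ ω, |μ[P (k + 1) | ℱ k] ω| ∂μ :=
        integral_add (hP k).abs integrable_condExp.abs
    _ ≤ ∫ ω, |P k ω| ∂μ + ∫ ω, |P (k + 1) ω| ∂μ := by
        grw [integral_abs_condExp_le]

end

theorem summable_martingale_increments_general
    {Ω : Type*} {m0 : MeasurableSpace Ω} {μ : Measure Ω} [IsProbabilityMeasure μ]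
    {ℱ : Filtration ℕ m0} {P V : ℕ → Ω → ℝ}
    (hPint : ∀ k, Integrable (P k) μ)
    (hVint : ∀ k, Integrable (V k) μ)
    (hPV : ∀ k, ∀ᵐ ω ∂μ, (P k ω) ^ 2 ≤ V k ω)
    {α : ℝ} (hα : α ∈ Set.Ico (0 : ℝ) 1)
    (hdec : ∀ k, ∀ᵐ ω ∂μ, (μ[V (k + 1) | ℱ k]) ω ≤ α * V k ω) :
    Summable (fun k => ∫ ω, |P k ω - (μ[P (k + 1) | ℱ k]) ω| ∂μ) ∧
      Integrable (fun ω => ∑' k, |P k ω - (μ[P (k + 1) | ℱ k]) ω|) μ := by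
  have hsum_abs : Summable fun k => ∫ ω, |P k ω| ∂μ :=
    summable_integral_abs_of_sq_le (fun k => (hPint k).aestronglyMeasurable) hVint hPV hα
      (integral_le_pow_mul_of_condExp_le hVint hα.1 hdec)
  have hsum := summable_integral_abs_sub_condExp (ℱ := ℱ) hPint hsum_abs
  exact ⟨hsum, integrable_tsum_of_summable_integral
    (fun k => ((hPint k).sub integrable_condExp).abs) (fun k ω => abs_nonneg _) hsum⟩

/-- Summability of the martingale increments: under the geometric persistence hypotheses,
`∑ₖ 𝔼(|P k - 𝔼[P (k+1) | ℱ k]|) < ∞`, and in particular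
`∑ₖ |P k - 𝔼[P (k+1) | ℱ k]|` is integrable. -/
theorem summable_martingale_increments
    {Ω : Type*} {m0 : MeasurableSpace Ω} {μ : Measure Ω} [IsProbabilityMeasure μ]
    {ℱ : Filtration ℕ m0} {P V : ℕ → Ω → ℝ}
    (hPadapted : Adapted ℱ P) (hVadapted : Adapted ℱ V)
    (hPint : ∀ k, Integrable (P k) μ)
    (hVnn : ∀ k, ∀ᵐ ω ∂μ, 0 ≤ V k ω) (hVint : ∀ k, Integrable (V k) μ)
    (hPV : ∀ k, ∀ᵐ ω ∂μ, (P k ω) ^ 2 ≤ V k ω)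
    {α : ℝ} (hα : α ∈ Set.Ico (0 : ℝ) 1)
    (hdec : ∀ k, ∀ᵐ ω ∂μ, (μ[V (k + 1) | ℱ k]) ω ≤ α * V k ω) :
    Summable (fun k => ∫ ω, |P k ω - (μ[P (k + 1) | ℱ k]) ω| ∂μ) ∧
      Integrable (fun ω => ∑' k, |P k ω - (μ[P (k + 1) | ℱ k]) ω|) μ :=
  summable_martingale_increments_general hPint hVint hPV hα hdec
end

section
/- Correctness of the geometric-persistence invariant synthesis: Let {P_k}_{k∈ℕ} and {V_k}_{k∈ℕ} be sequences of real-valued random variables adapted to a filtration {𝓕_k}_{k∈ℕ} on a probability space (Ω, 𝓕, ℙ), with each P_k and V_k integrable, each V_k nonnegative, P_k² ≤ V_k almost surely for every k, and 𝔼[V_{k+1} | 𝓕_k] ≤ α·V_k almost surely for every k, where α ∈ [0, 1). Define M_0 := P_0 and, for k ≥ 1, M_k := P_0 + Σ_{i=1}^{k} (P_i − 𝔼[P_i | 𝓕_{i−1}]). Then {M_k}_{k∈ℕ} is a martingale adapted to {𝓕_k}_{k∈ℕ}, there exists an integrable function g : Ω → ℝ with |M_k| ≤ g almost surely for every k ∈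 ℕ, and for every stopping time T with ℙ(T < ∞) = 1 the stopped value M_T is integrable and 𝔼(M_T) = 𝔼(P_0). -/
open MeasureTheory ProbabilityTheory Filter
open scoped ENNReal NNReal Topology

/-- Correctness of the geometric-persistence invariant synthesis: under the geometric
persistence hypotheses on `P` and `V`, the Doob martingale
`M k = P 0 + ∑_{i=1}^{k} (P i - 𝔼[P i | ℱ (i-1)])` is a martingale, is uniformly
dominated by an integrable function, and for every a.s. finite stopping time `T` the
stopped value `M_T` is integrable with `𝔼(M_T) = 𝔼(P 0)`. -/
theorem geometric_persistence_invariant_synthesis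
    {Ω : Type*} {m0 : MeasurableSpace Ω} {μ : Measure Ω} [IsProbabilityMeasure μ]
    {ℱ : Filtration ℕ m0} {P V : ℕ → Ω → ℝ}
    (hPadapted : Adapted ℱ P) (hVadapted : Adapted ℱ V)
    (hPint : ∀ k, Integrable (P k) μ)
    (hVnn : ∀ k, ∀ᵐ ω ∂μ, 0 ≤ V k ω) (hVint : ∀ k, Integrable (V k) μ)
    (hPV : ∀ k, ∀ᵐ ω ∂μ, (P k ω) ^ 2 ≤ V k ω)
    {α : ℝ} (hα : α ∈ Set.Ico (0 : ℝ) 1)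
    (hdec : ∀ k, ∀ᵐ ω ∂μ, (μ[V (k + 1) | ℱ k]) ω ≤ α * V k ω)
    (M : ℕ → Ω → ℝ)
    (hM : ∀ k ω, M k ω = P 0 ω + ∑ i ∈ Finset.Icc 1 k, (P i ω - (μ[P i | ℱ (i - 1)]) ω)) :
    Martingale M ℱ μ ∧
      (∃ g : Ω → ℝ, Integrable g μ ∧ ∀ k, ∀ᵐ ω ∂μ, |M k ω| ≤ g ω) ∧
      ∀ T : Ω → ℕ∞, (∀ k : ℕ, MeasurableSet[ℱ k] {ω | T ω ≤ (k : ℕ∞)}) →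
        (∀ᵐ ω ∂μ, T ω < ⊤) →
        Integrable (fun ω => M (T ω).toNat ω) μ ∧
          ∫ ω, M (T ω).toNat ω ∂μ = ∫ ω, P 0 ω ∂μ := by
  classical
  obtain ⟨hα0, hα1⟩ := hα
  set d : ℕ → Ω → ℝ := fun i ω => P i ω - (μ[P i | ℱ (i - 1)]) ω with hd_def
  have hdint : ∀ i, Integrable (d i) μ := fun i => (hPint i).sub integrable_condExp
  have hMfun : ∀ k, M k = fun ω => P 0 ω + ∑ i ∈ Finset.Icc 1 k, d i ω := fun k => funext (hM k)
  -- adaptedness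
  have hMadapted : StronglyAdapted ℱ M := by
    intro k
    rw [hMfun k]
    refine StronglyMeasurable.add ((hPadapted 0).stronglyMeasurable.mono (ℱ.mono (Nat.zero_le k))) ?_
    refine Finset.stronglyMeasurable_fun_sum _ fun i hi => ?_
    have hik : i ≤ k := (Finset.mem_Icc.mp hi).2
    exact ((hPadapted i).stronglyMeasurable.mono (ℱ.mono hik)).sub
      (stronglyMeasurable_condExp.mono (ℱ.mono ((Nat.sub_le i 1).trans hik)))
  have hMint : ∀ k, Integrable (M k) μ := by
    intro k; rw [hMfun k]
    exact (hPint 0).add (integrable_finset_sum _ fun i _ => hdint i)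
  -- martingale
  have hMsucc : ∀ k, M (k + 1) = M k + d (k + 1) := by
    intro k; funext ω
    have h1 : (1 : ℕ) ≤ k + 1 := Nat.le_add_left 1 k
    simp only [Pi.add_apply, hM (k + 1), hM k, Finset.sum_Icc_succ_top h1, hd_def,
      Nat.add_sub_cancel]
    ring
  have hMart : Martingale M ℱ μ := by
    refine martingale_nat hMadapted hMint fun k => ?_
    have h1 : μ[M (k + 1)|ℱ k] =ᵐ[μ] μ[M k|ℱ k] + μ[d (k + 1)|ℱ k] := by
      rw [hMsucc k]; exact condExp_add (hMint k) (hdint (k + 1)) _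
    have h2 : μ[M k|ℱ k] = M k :=
      condExp_of_stronglyMeasurable (ℱ.le k) (hMadapted k) (hMint k)
    have h3 : μ[d (k + 1)|ℱ k] =ᵐ[μ] 0 := by
      have hdk : d (k + 1) = P (k + 1) - μ[P (k + 1)|ℱ k] := by
        funext ω; simp [hd_def, Nat.add_sub_cancel]
      rw [hdk]
      refine (condExp_sub (hPint (k + 1)) integrable_condExp _).trans ?_
      have h4 : μ[μ[P (k + 1)|ℱ k]|ℱ k] = μ[P (k + 1)|ℱ k] :=
        condExp_of_stronglyMeasurable (ℱ.le k) stronglyMeasurable_condExp integrable_condExp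
      rw [h4]
      filter_upwards with ω
      simp
    filter_upwards [h1, h3] with ω hω1 hω3
    rw [hω1, Pi.add_apply, hω3, h2, Pi.zero_apply, add_zero]
  -- geometric decay of E[V k]
  set C0 : ℝ := ∫ ω, V 0 ω ∂μ with hC0_def
  have hC0nn : (0 : ℝ) ≤ C0 := integral_nonneg_of_ae (hVnn 0)
  have hEV : ∀ k, ∫ ω, V k ω ∂μ ≤ α ^ k * C0 := by
    intro k
    induction k with
    | zero => simp [hC0_def]
    | succ k ih =>
      have h1 : ∫ ω, V (k + 1) ω ∂μ = ∫ ω, (μ[V (k + 1)|ℱ k]) ω ∂μ :=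
        (integral_condExp (ℱ.le k)).symm
      have h2 : ∫ ω, (μ[V (k + 1)|ℱ k]) ω ∂μ ≤ ∫ ω, α * V k ω ∂μ :=
        integral_mono_ae integrable_condExp ((hVint k).const_mul α) (hdec k)
      rw [integral_const_mul] at h2
      calc ∫ ω, V (k + 1) ω ∂μ ≤ α * ∫ ω, V k ω ∂μ := by rw [h1]; exact h2
        _ ≤ α * (α ^ k * C0) := by
            exact mul_le_mul_of_nonneg_left ih hα0
        _ = α ^ (k + 1) * C0 := by ring
  -- the geometric rate β
  set β : ℝ := max (Real.sqrt α) (1 / 2) with hβ_def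
  have hβpos : 0 < β := lt_max_of_lt_right one_half_pos
  have hβlt1 : β < 1 := max_lt (by
      rw [show (1 : ℝ) = Real.sqrt 1 by simp]
      exact Real.sqrt_lt_sqrt hα0 hα1) one_half_lt_one
  have hαβ : α ≤ β ^ 2 := by
    calc α = Real.sqrt α ^ 2 := (Real.sq_sqrt hα0).symm
      _ ≤ β ^ 2 := pow_le_pow_left₀ (Real.sqrt_nonneg α) (le_max_left _ _) 2
  have hαβk : ∀ k, α ^ k ≤ (β ^ k) ^ 2 := by
    intro k
    calc α ^ k ≤ (β ^ 2) ^ k := pow_le_pow_left₀ hα0 hαβ k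
      _ = (β ^ k) ^ 2 := by ring
  -- pointwise bound on |P k|
  have hPabs : ∀ k, ∀ᵐ ω ∂μ, |P k ω| ≤ β ^ k / 2 + V k ω / (2 * β ^ k) := by
    intro k
    have hb : (0 : ℝ) < β ^ k := pow_pos hβpos k
    filter_upwards [hPV k] with ω hω
    have h1 : 2 * β ^ k * |P k ω| ≤ β ^ k * β ^ k + V k ω := by
      nlinarith [sq_nonneg (|P k ω| - β ^ k), sq_abs (P k ω)]
    have h2 : |P k ω| ≤ (β ^ k * β ^ k + V k ω) / (2 * β ^ k) := by
      rw [le_div_iff₀ (by positivity)]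
      linarith [h1]
    calc |P k ω| ≤ (β ^ k * β ^ k + V k ω) / (2 * β ^ k) := h2
      _ = β ^ k / 2 + V k ω / (2 * β ^ k) := by field_simp
  -- integral bound on |P k|
  have hEP : ∀ k, ∫ ω, |P k ω| ∂μ ≤ (1 + C0) / 2 * β ^ k := by
    intro k
    have hb : (0 : ℝ) < β ^ k := pow_pos hβpos k
    have hint2 : Integrable (fun ω => β ^ k / 2 + V k ω / (2 * β ^ k)) μ :=
      (integrable_const _).add ((hVint k).div_const _)
    have h1 : ∫ ω, |P k ω| ∂μ ≤ ∫ ω, (β ^ k / 2 + V k ω / (2 * β ^ k)) ∂μ :=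
      integral_mono_ae (hPint k).abs hint2 (hPabs k)
    have h2 : ∫ ω, (β ^ k / 2 + V k ω / (2 * β ^ k)) ∂μ
        = β ^ k / 2 + (∫ ω, V k ω ∂μ) / (2 * β ^ k) := by
      rw [integral_add (integrable_const _) ((hVint k).div_const _), integral_const,
        integral_div]
      simp
    have h3 : (∫ ω, V k ω ∂μ) / (2 * β ^ k) ≤ β ^ k * C0 / 2 := by
      rw [div_le_iff₀ (by positivity)]
      calc ∫ ω, V k ω ∂μ ≤ α ^ k * C0 := hEV k
        _ ≤ (β ^ k) ^ 2 * C0 := mul_le_mul_of_nonneg_right (hαβk k) hC0nn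
        _ = β ^ k * C0 / 2 * (2 * β ^ k) := by ring
    calc ∫ ω, |P k ω| ∂μ ≤ β ^ k / 2 + (∫ ω, V k ω ∂μ) / (2 * β ^ k) := by
          rw [← h2]; exact h1
      _ ≤ β ^ k / 2 + β ^ k * C0 / 2 := by linarith
      _ = (1 + C0) / 2 * β ^ k := by ring
  -- integral bound on |d i|
  have hEd : ∀ i, ∫ ω, |d i ω| ∂μ ≤ (1 + C0) * β ^ i := by
    intro i
    have habs : ∀ ω, |d i ω| ≤ |P i ω| + |(μ[P i|ℱ (i - 1)]) ω| := by
      intro ω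
      simp only [hd_def]
      exact abs_sub _ _
    have h1 : ∫ ω, |d i ω| ∂μ ≤ ∫ ω, (|P i ω| + |(μ[P i|ℱ (i - 1)]) ω|) ∂μ :=
      integral_mono_ae (hdint i).abs ((hPint i).abs.add integrable_condExp.abs)
        (Filter.Eventually.of_forall habs)
    have h2 : ∫ ω, (|P i ω| + |(μ[P i|ℱ (i - 1)]) ω|) ∂μ
        = ∫ ω, |P i ω| ∂μ + ∫ ω, |(μ[P i|ℱ (i - 1)]) ω| ∂μ :=
      integral_add (hPint i).abs integrable_condExp.abs
    have h3 : ∫ ω, |(μ[P i|ℱ (i - 1)]) ω| ∂μ ≤ ∫ ω, |P i ω| ∂μ :=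
      integral_abs_condExp_le _
    calc ∫ ω, |d i ω| ∂μ ≤ ∫ ω, |P i ω| ∂μ + ∫ ω, |(μ[P i|ℱ (i - 1)]) ω| ∂μ := by
          rw [← h2]; exact h1
      _ ≤ (1 + C0) / 2 * β ^ i + (1 + C0) / 2 * β ^ i := add_le_add (hEP i) (h3.trans (hEP i))
      _ = (1 + C0) * β ^ i := by ring
  -- dominating function
  have hdm : ∀ i, AEMeasurable (fun ω => (‖d i ω‖₊ : ℝ≥0∞)) μ :=
    fun i => (hdint i).aestronglyMeasurable.enorm
  set G : Ω → ℝ≥0∞ := fun ω => (‖P 0 ω‖₊ : ℝ≥0∞) + ∑' i, (‖d i ω‖₊ : ℝ≥0∞) with hG_def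
  have hGm : AEMeasurable G μ :=
    ((hPint 0).aestronglyMeasurable.enorm).add (AEMeasurable.ennreal_tsum hdm)
  have hsummable : Summable fun i => (1 + C0) * β ^ i :=
    (summable_geometric_of_lt_one hβpos.le hβlt1).mul_left _
  have hGlt : ∫⁻ ω, G ω ∂μ ≠ ⊤ := by
    have h1 : ∫⁻ ω, G ω ∂μ
        = ∫⁻ ω, (‖P 0 ω‖₊ : ℝ≥0∞) ∂μ + ∫⁻ ω, ∑' i, (‖d i ω‖₊ : ℝ≥0∞) ∂μ :=
      lintegral_add_left' ((hPint 0).aestronglyMeasurable.enorm) _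
    have h2 : ∫⁻ ω, ∑' i, (‖d i ω‖₊ : ℝ≥0∞) ∂μ = ∑' i, ∫⁻ ω, (‖d i ω‖₊ : ℝ≥0∞) ∂μ :=
      lintegral_tsum hdm
    have h3 : ∀ i, ∫⁻ ω, (‖d i ω‖₊ : ℝ≥0∞) ∂μ = ENNReal.ofReal (∫ ω, |d i ω| ∂μ) := by
      intro i
      rw [show ∫⁻ ω, (‖d i ω‖₊ : ℝ≥0∞) ∂μ = ∫⁻ ω, ‖d i ω‖ₑ ∂μ from rfl,
        ← ofReal_integral_norm_eq_lintegral_enorm (hdint i)]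
      simp [Real.norm_eq_abs]
    have h4 : ∑' i, ∫⁻ ω, (‖d i ω‖₊ : ℝ≥0∞) ∂μ
        ≤ ∑' i, ENNReal.ofReal ((1 + C0) * β ^ i) := by
      refine ENNReal.tsum_le_tsum fun i => ?_
      rw [h3 i]
      exact ENNReal.ofReal_le_ofReal (hEd i)
    have h5 : ∑' i, ENNReal.ofReal ((1 + C0) * β ^ i)
        = ENNReal.ofReal (∑' i, (1 + C0) * β ^ i) :=
      (ENNReal.ofReal_tsum_of_nonneg (fun i => by positivity) hsummable).symm
    rw [h1, h2]
    refine ENNReal.add_ne_top.mpr ⟨(hPint 0).2.ne, ?_⟩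
    exact ((h4.trans_eq h5).trans_lt ENNReal.ofReal_lt_top).ne
  have hg_int : Integrable (fun ω => (G ω).toReal) μ :=
    integrable_toReal_of_lintegral_ne_top hGm hGlt
  have hbound : ∀ k, ∀ᵐ ω ∂μ, |M k ω| ≤ (G ω).toReal := by
    intro k
    filter_upwards [ae_lt_top' hGm hGlt] with ω hω
    have h1 : ENNReal.ofReal |M k ω| ≤ G ω := by
      rw [hM k]
      calc ENNReal.ofReal |P 0 ω + ∑ i ∈ Finset.Icc 1 k, (P i ω - (μ[P i|ℱ (i - 1)]) ω)|
          = (‖P 0 ω + ∑ i ∈ Finset.Icc 1 k, d i ω‖₊ : ℝ≥0∞) := by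
            rw [← Real.norm_eq_abs]; exact ofReal_norm _
        _ ≤ (‖P 0 ω‖₊ : ℝ≥0∞) + (‖∑ i ∈ Finset.Icc 1 k, d i ω‖₊ : ℝ≥0∞) := by
            exact_mod_cast nnnorm_add_le _ _
        _ ≤ (‖P 0 ω‖₊ : ℝ≥0∞) + ∑ i ∈ Finset.Icc 1 k, (‖d i ω‖₊ : ℝ≥0∞) := by
            refine add_le_add (le_refl _) ?_
            calc ((‖∑ i ∈ Finset.Icc 1 k, d i ω‖₊ : ℝ≥0) : ℝ≥0∞)
                ≤ ((∑ i ∈ Finset.Icc 1 k, ‖d i ω‖₊ : ℝ≥0) : ℝ≥0∞) := by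
                  exact_mod_cast nnnorm_sum_le _ _
              _ = ∑ i ∈ Finset.Icc 1 k, (‖d i ω‖₊ : ℝ≥0∞) := by push_cast; rfl
        _ ≤ G ω := add_le_add (le_refl _) (ENNReal.sum_le_tsum _)
    calc |M k ω| = (ENNReal.ofReal |M k ω|).toReal :=
          (ENNReal.toReal_ofReal (abs_nonneg _)).symm
      _ ≤ (G ω).toReal := ENNReal.toReal_mono hω.ne h1
  refine ⟨hMart, ⟨fun ω => (G ω).toReal, hg_int, hbound⟩, ?_⟩
  -- optional stopping
  intro T hT hTfin
  have hM0 : M 0 = P 0 := by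
    funext ω; simp [hM 0]
  set τ : ℕ → Ω → ℕ := fun n ω => if T ω ≤ (n : ℕ∞) then (T ω).toNat else n with hτ_def
  have hτ_le : ∀ n ω, τ n ω ≤ n := by
    intro n ω
    by_cases h : T ω ≤ (n : ℕ∞)
    · simp only [hτ_def, if_pos h]
      exact ENat.toNat_le_of_le_coe h
    · simp [hτ_def, if_neg h]
  set σ : ℕ → Ω → WithTop ℕ := fun n ω => WithTop.some (τ n ω) with hσ_def
  have hσ_le : ∀ n ω, σ n ω ≤ WithTop.some n := fun n ω => WithTop.coe_le_coe.mpr (hτ_le n ω)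
  have hτ_stop : ∀ n, IsStoppingTime ℱ (σ n) := by
    intro n k
    suffices e : MeasurableSet[ℱ k] {ω | τ n ω ≤ k} by
      convert e using 1; ext ω; simp [hσ_def]
    by_cases hnk : n ≤ k
    · have h : {ω | τ n ω ≤ k} = Set.univ :=
        Set.eq_univ_of_forall fun ω => (hτ_le n ω).trans hnk
      rw [h]; exact MeasurableSet.univ
    · push_neg at hnk
      have h : {ω | τ n ω ≤ k} = {ω | T ω ≤ (k : ℕ∞)} := by
        ext ω
        simp only [Set.mem_setOf_eq, hτ_def]
        by_cases h : T ω ≤ (n : ℕ∞)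
        · rw [if_pos h]
          constructor
          · intro hle
            have hne : T ω ≠ ⊤ := by
              intro ht; rw [ht] at h
              simp at h
            rw [← ENat.coe_toNat hne]
            exact_mod_cast hle
          · intro hle
            exact ENat.toNat_le_of_le_coe hle
        · rw [if_neg h]
          constructor
          · intro hle; omega
          · intro hle
            exact absurd (hle.trans (by exact_mod_cast hnk.le)) h
      rw [h]; exact hT k
  have hSV_meas : ∀ n, AEStronglyMeasurable (stoppedValue M (σ n)) μ := by
    intro n
    rw [stoppedValue_eq (hσ_le n)]
    refine StronglyMeasurable.aestronglyMeasurable ?_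
    simp only [Finset.sum_apply]
    exact Finset.stronglyMeasurable_fun_sum _ fun i _ =>
      ((hMadapted i).mono (ℱ.le i)).indicator (ℱ.le i _ ((hτ_stop n).measurableSet_eq i))
  have key : ∀ n, ∫ ω, stoppedValue M (σ n) ω ∂μ = ∫ ω, P 0 ω ∂μ := by
    intro n
    have h1 := hMart.stoppedValue_ae_eq_condExp_of_le_const (hτ_stop n) (hσ_le n)
    rw [integral_congr_ae h1,
      integral_condExp ((hτ_stop n).measurableSpace_le_of_le (hσ_le n))]
    have h2 := hMart.condExp_ae_eq (Nat.zero_le n)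
    rw [← integral_condExp (ℱ.le 0) (f := M n), integral_congr_ae h2, hM0]
  have hbound_all : ∀ᵐ ω ∂μ, ∀ k, |M k ω| ≤ (G ω).toReal := ae_all_iff.mpr hbound
  have h_tend : ∀ᵐ ω ∂μ, Tendsto (fun n => stoppedValue M (σ n) ω) atTop
      (𝓝 (M (T ω).toNat ω)) := by
    filter_upwards [hTfin] with ω hω
    refine tendsto_atTop_of_eventually_const (i₀ := (T ω).toNat) fun n hn => ?_
    have hle : T ω ≤ (n : ℕ∞) := by
      rw [← ENat.coe_toNat hω.ne]
      exact_mod_cast hn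
    show M (σ n ω).untopA ω = _
    simp only [hσ_def, hτ_def, if_pos hle]; rfl
  have h_fbound : ∀ n, ∀ᵐ ω ∂μ, ‖stoppedValue M (σ n) ω‖ ≤ (G ω).toReal := by
    intro n
    filter_upwards [hbound_all] with ω h
    rw [Real.norm_eq_abs]
    exact h (τ n ω)
  have h_main := tendsto_integral_of_dominated_convergence (fun ω => (G ω).toReal)
    hSV_meas hg_int h_fbound h_tend
  have hf_meas : AEStronglyMeasurable (fun ω => M (T ω).toNat ω) μ :=
    aestronglyMeasurable_of_tendsto_ae _ hSV_meas h_tend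
  have hf_int : Integrable (fun ω => M (T ω).toNat ω) μ := by
    refine Integrable.mono' hg_int hf_meas ?_
    filter_upwards [hbound_all] with ω h
    rw [Real.norm_eq_abs]
    exact h _
  refine ⟨hf_int, ?_⟩
  have h_const : Tendsto (fun _ : ℕ => ∫ ω, P 0 ω ∂μ) atTop
      (𝓝 (∫ ω, M (T ω).toNat ω ∂μ)) := by
    refine h_main.congr fun n => ?_
    exact key n
  exact tendsto_nhds_unique h_const tendsto_const_nhds
end
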